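/- (FOL Adequacy) For every formula φ in the FOL fragment of ADIF and every hyperteam 𝕏 over a superset of sup(φ): (1) 𝔄, 𝕏 ⊨^{∃∀} φ iff there exists a team X ∈ 𝕏 such that 𝔄, α ⊨_FOL φ for every assignment α ∈ X; (2) 𝔄, 𝕏 ⊨^{∀∃} φ iff for every team X ∈ 𝕏 there exists an assignment α ∈ X with 𝔄, α ⊨_FOL φ. -/

import Mathlib

open scoped Classical

namespace ADIF

/-- A relational first-order structure over a signature given by relation
symbols `RSym` with arities `ar`. -/
structure Struct (RSym : Type) (ar : RSym → ℕ) where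
  A : Type
  nonempty : Nonempty A
  interp : ∀ R : RSym, (Fin (ar R) → A) → Prop

variable {Var RSym : Type} {ar : RSym → ℕ} {A : Type}

/-- Partial assignments from variables to values. -/
abbrev Asg (Var A : Type) := Var → Option A

/-- Teams of assignments. -/
abbrev Team (Var A : Type) := Set (Asg Var A)

/-- Hyperteams: sets of teams. -/
abbrev Hyperteam (Var A : Type) := Set (Team Var A)

/-- The empty assignment. -/
def emptyAsg (Var A : Type) : Asg Var A := fun _ => none

/-- Domain of a partial assignment. -/
def dom (α : Asg Var A) : Set Var := {v | α v ≠ none}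

/-- Restriction of an assignment to a set of variables. -/
noncomputable def restrictA (α : Asg Var A) (W : Set Var) : Asg Var A :=
  fun v => if v ∈ W then α v else none

/-- Restriction of a team. -/
noncomputable def restrictT (X : Team Var A) (W : Set Var) : Team Var A :=
  (fun α => restrictA α W) '' X

/-- Restriction of a hyperteam. -/
noncomputable def restrictH (𝕏 : Hyperteam Var A) (W : Set Var) : Hyperteam Var A :=
  (fun X => restrictT X W) '' 𝕏

/-- The preorder `⊑` on hyperteams. -/
def incl (𝕏₁ 𝕏₂ : Hyperteam Var A) : Prop :=
  ∀ X₁ ∈ 𝕏₁, ∃ X₂ ∈ 𝕏₂, X₂ ⊆ X₁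

/-- The equivalence `≡` on hyperteams. -/
def equivH (𝕏₁ 𝕏₂ : Hyperteam Var A) : Prop :=
  incl 𝕏₁ 𝕏₂ ∧ incl 𝕏₂ 𝕏₁

/-- The preorder `⊑_W` on hyperteams, relativized to variables in `W`. -/
noncomputable def inclW (W : Set Var) (𝕏₁ 𝕏₂ : Hyperteam Var A) : Prop :=
  incl (restrictH 𝕏₁ W) (restrictH 𝕏₂ W)

/-- The equivalence `≡_W` on hyperteams, relativized to variables in `W`. -/
noncomputable def equivW (W : Set Var) (𝕏₁ 𝕏₂ : Hyperteam Var A) : Prop :=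
  equivH (restrictH 𝕏₁ W) (restrictH 𝕏₂ W)

/-- The dual hyperteam `𝕏~`: the set of images of all choice functions for `𝕏`. -/
def dualH (𝕏 : Hyperteam Var A) : Hyperteam Var A :=
  {Y | ∃ χ : Team Var A → Asg Var A, (∀ X ∈ 𝕏, χ X ∈ X) ∧ Y = χ '' 𝕏}

/-- A hyperteam is proper if it is neither empty nor null. -/
def Proper (𝕏 : Hyperteam Var A) : Prop := 𝕏 ≠ ∅ ∧ ∅ ∉ 𝕏

/-- All assignments in all teams of `𝕏` are defined exactly on `U`. -/
def HyperteamOn (𝕏 : Hyperteam Var A) (U : Set Var) : Prop :=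
  ∀ X ∈ 𝕏, ∀ α ∈ X, dom α = U

/-- `𝕏` is a genuine hyperteam: all its assignments share the same domain. -/
def IsHyperteam (𝕏 : Hyperteam Var A) : Prop := ∃ U : Set Var, HyperteamOn 𝕏 U

/-- `𝕏` is a hyperteam over some superset of `V`. -/
def OverSup (𝕏 : Hyperteam Var A) (V : Set Var) : Prop :=
  ∃ U : Set Var, V ⊆ U ∧ HyperteamOn 𝕏 U

/-- `W`-uniform functions from assignments to values. -/
def FW (W : Set Var) : Set (Asg Var A → A) :=
  {F | ∀ α : Asg Var A, F α = F (restrictA α W)}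

/-- Update of an assignment at a variable. -/
noncomputable def updateA (α : Asg Var A) (x : Var) (a : A) : Asg Var A :=
  fun v => if v = x then some a else α v

/-- Extension of an assignment by a function for a variable. -/
noncomputable def extA (α : Asg Var A) (F : Asg Var A → A) (x : Var) : Asg Var A :=
  updateA α x (F α)

/-- Extension of a team by a function for a variable. -/
noncomputable def extT (X : Team Var A) (F : Asg Var A → A) (x : Var) : Team Var A :=
  (fun α => extA α F x) '' X

/-- Extension of a hyperteam with a variable, `W`-uniformly. -/
noncomputable def extH (W : Set Var) (𝕏 : Hyperteam Var A) (x : Var) : Hyperteam Var A :=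
  {Y | ∃ X ∈ 𝕏, ∃ F ∈ FW W, Y = extT X F x}

/-- Bipartitions of a hyperteam. -/
def Bipartition (𝕏₁ 𝕏₂ 𝕏 : Hyperteam Var A) : Prop :=
  𝕏₁ ∩ 𝕏₂ = ∅ ∧ 𝕏₁ ∪ 𝕏₂ = 𝕏

/-- Cylindrification of a team with respect to a variable. -/
noncomputable def cylT (X : Team Var A) (x : Var) : Team Var A :=
  {β | ∃ α ∈ X, ∃ a : A, β = updateA α x a}

/-- Cylindrification of a hyperteam with respect to a variable. -/
noncomputable def cylH (𝕏 : Hyperteam Var A) (x : Var) : Hyperteam Var A :=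
  (fun X => cylT X x) '' 𝕏

/-- ADIF formulas over variables `Var` and a relational signature. -/
inductive Formula (Var RSym : Type) (ar : RSym → ℕ) : Type
  | fls : Formula Var RSym ar
  | tru : Formula Var RSym ar
  | atom (R : RSym) (xs : Fin (ar R) → Var) : Formula Var RSym ar
  | not (φ : Formula Var RSym ar) : Formula Var RSym ar
  | and (φ ψ : Formula Var RSym ar) : Formula Var RSym ar
  | or (φ ψ : Formula Var RSym ar) : Formula Var RSym ar
  | ex (s : Bool) (W : Finset Var) (x : Var) (φ : Formula Var RSym ar) : Formula Var RSym ar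
  | all (s : Bool) (W : Finset Var) (x : Var) (φ : Formula Var RSym ar) : Formula Var RSym ar

/-- The constraint set `⟦±W⟧`: `W` itself for `+` (`s = true`),
its complement for `−` (`s = false`). -/
def denot (s : Bool) (W : Finset Var) : Set Var :=
  if s then (↑W : Set Var) else (↑W : Set Var)ᶜ

/-- Support variables of an ADIF formula. -/
def supv : Formula Var RSym ar → Set Var
  | .fls => ∅
  | .tru => ∅
  | .atom _ xs => Set.range xs
  | .not φ => supv φ
  | .and φ ψ => supv φ ∪ supv ψ
  | .or φ ψ => supv φ ∪ supv ψ
  | .ex _ _ x φ => supv φ \ {x}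
  | .all _ _ x φ => supv φ \ {x}

/-- Free variables of an ADIF formula. -/
noncomputable def freev : Formula Var RSym ar → Set Var
  | .fls => ∅
  | .tru => ∅
  | .atom _ xs => Set.range xs
  | .not φ => freev φ
  | .and φ ψ => freev φ ∪ freev ψ
  | .or φ ψ => freev φ ∪ freev ψ
  | .ex s W x φ => if x ∈ freev φ then (freev φ \ {x}) ∪ denot s W else freev φ
  | .all s W x φ => if x ∈ freev φ then (freev φ \ {x}) ∪ denot s W else freev φ

/-- Alternation flags. -/
inductive Flag : Type
  | EA : Flag
  | AE : Flag

/-- The dual alternation flag. -/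
def Flag.dual : Flag → Flag
  | .EA => .AE
  | .AE => .EA

/-- Satisfaction of an atom by a (partial) assignment. -/
def atomSat (𝔄 : Struct RSym ar) (R : RSym) (xs : Fin (ar R) → Var)
    (α : Asg Var 𝔄.A) : Prop :=
  ∃ v : Fin (ar R) → 𝔄.A, (∀ i, α (xs i) = some (v i)) ∧ 𝔄.interp R v

/-- Hodges' alternating satisfaction relation `𝔄, 𝕏 ⊨^fl φ` for ADIF. -/
noncomputable def sat (𝔄 : Struct RSym ar) :
    Formula Var RSym ar → Flag → Hyperteam Var 𝔄.A → Prop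
  | .fls, .EA, 𝕏 => ∅ ∈ 𝕏
  | .fls, .AE, 𝕏 => 𝕏 = ∅
  | .tru, .EA, 𝕏 => 𝕏 ≠ ∅
  | .tru, .AE, 𝕏 => ∅ ∉ 𝕏
  | .atom R xs, .EA, 𝕏 => ∃ X ∈ 𝕏, ∀ α ∈ X, atomSat 𝔄 R xs α
  | .atom R xs, .AE, 𝕏 => ∀ X ∈ 𝕏, ∃ α ∈ X, atomSat 𝔄 R xs α
  | .not φ, fl, 𝕏 => ¬ sat 𝔄 φ fl.dual 𝕏
  | .and φ ψ, .EA, 𝕏 =>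
      ∀ 𝕏₁ 𝕏₂, Bipartition 𝕏₁ 𝕏₂ 𝕏 → sat 𝔄 φ .EA 𝕏₁ ∨ sat 𝔄 ψ .EA 𝕏₂
  | .and φ ψ, .AE, 𝕏 =>
      ∀ 𝕏₁ 𝕏₂, Bipartition 𝕏₁ 𝕏₂ (dualH 𝕏) → sat 𝔄 φ .EA 𝕏₁ ∨ sat 𝔄 ψ .EA 𝕏₂
  | .or φ ψ, .AE, 𝕏 =>
      ∃ 𝕏₁ 𝕏₂, Bipartition 𝕏₁ 𝕏₂ 𝕏 ∧ sat 𝔄 φ .AE 𝕏₁ ∧ sat 𝔄 ψ .AE 𝕏₂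
  | .or φ ψ, .EA, 𝕏 =>
      ∃ 𝕏₁ 𝕏₂, Bipartition 𝕏₁ 𝕏₂ (dualH 𝕏) ∧ sat 𝔄 φ .AE 𝕏₁ ∧ sat 𝔄 ψ .AE 𝕏₂
  | .ex s W x φ, .EA, 𝕏 => sat 𝔄 φ .EA (extH (denot s W) 𝕏 x)
  | .ex s W x φ, .AE, 𝕏 => sat 𝔄 φ .EA (extH (denot s W) (dualH 𝕏) x)
  | .all s W x φ, .AE, 𝕏 => sat 𝔄 φ .AE (extH (denot s W) 𝕏 x)
  | .all s W x φ, .EA, 𝕏 => sat 𝔄 φ .AE (extH (denot s W) (dualH 𝕏) x)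

/-- `φ` is `fl`-satisfiable on `𝔄`: some proper hyperteam over `sup φ` satisfies it. -/
noncomputable def SatOn (𝔄 : Struct RSym ar) (fl : Flag) (φ : Formula Var RSym ar) : Prop :=
  ∃ 𝕏 : Hyperteam Var 𝔄.A, HyperteamOn 𝕏 (supv φ) ∧ Proper 𝕏 ∧ sat 𝔄 φ fl 𝕏

/-- `φ` is `fl`-satisfiable: `fl`-satisfiable on some structure. -/
noncomputable def Satisfiable (Var : Type) {RSym : Type} {ar : RSym → ℕ}
    (fl : Flag) (φ : Formula Var RSym ar) : Prop :=
  ∃ 𝔄 : Struct RSym ar, SatOn 𝔄 fl φ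

/-- `φ ⇛^fl ψ`: `fl`-implication between ADIF formulas. -/
noncomputable def ImpliesF (fl : Flag) (φ ψ : Formula Var RSym ar) : Prop :=
  ∀ 𝔄 : Struct RSym ar, ∀ 𝕏 : Hyperteam Var 𝔄.A,
    OverSup 𝕏 (supv φ ∪ supv ψ) → sat 𝔄 φ fl 𝕏 → sat 𝔄 ψ fl 𝕏

/-- `φ ≅^fl ψ`: `fl`-equivalence between ADIF formulas. -/
noncomputable def EquivFlagF (fl : Flag) (φ ψ : Formula Var RSym ar) : Prop :=
  ImpliesF fl φ ψ ∧ ImpliesF fl ψ φ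

/-- `φ ≅ ψ`: equivalence for both alternation flags. -/
noncomputable def EquivF (φ ψ : Formula Var RSym ar) : Prop :=
  ∀ fl : Flag, EquivFlagF fl φ ψ

end ADIF

namespace ADIF

variable {Var RSym : Type} {ar : RSym → ℕ} {A : Type}

/-- A formula is atomic if it is `⊥`, `⊤` or a relational atom. -/
def IsAtomic : Formula Var RSym ar → Prop
  | .fls => True
  | .tru => True
  | .atom _ _ => True
  | _ => False

/-- Negation normal form: negation is applied only to atomic formulas. -/
def IsNNF : Formula Var RSym ar → Prop
  | .fls => True
  | .tru => True
  | .atom _ _ => True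
  | .not φ => IsAtomic φ
  | .and φ ψ => IsNNF φ ∧ IsNNF ψ
  | .or φ ψ => IsNNF φ ∧ IsNNF ψ
  | .ex _ _ _ φ => IsNNF φ
  | .all _ _ _ φ => IsNNF φ

/-- An item `Q^{±W}x` of a quantifier prefix: `q = true` means `∃`,
`q = false` means `∀`; `s = true` means `+W`, `s = false` means `−W`. -/
structure QItem (Var : Type) where
  q : Bool
  s : Bool
  W : Finset Var
  x : Var

/-- The constraint set of a quantifier-prefix item. -/
def QItem.constr (i : QItem Var) : Set Var := denot i.s i.W

/-- Well-formed quantifier prefixes: each variable is quantified at most once,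
does not occur in its own constraint set, and is not quantified in the scope of
a quantifier whose constraint set contains it. -/
def GoodPrefix : List (QItem Var) → Prop
  | [] => True
  | i :: rest =>
      i.x ∉ i.constr ∧ (∀ j ∈ rest, j.x ≠ i.x ∧ j.x ∉ i.constr) ∧ GoodPrefix rest

/-- Prefixing a formula by a quantifier prefix. -/
def applyPrefix : List (QItem Var) → Formula Var RSym ar → Formula Var RSym ar
  | [], φ => φ
  | i :: rest, φ =>
      if i.q then Formula.ex i.s i.W i.x (applyPrefix rest φ)
      else Formula.all i.s i.W i.x (applyPrefix rest φ)

/-- The extension operator `ext^fl(𝕏, Q^{±W}x)` for a single quantifier. -/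
noncomputable def extQ (fl : Flag) (𝕏 : Hyperteam Var A) (i : QItem Var) : Hyperteam Var A :=
  match fl, i.q with
  | .EA, true => extH (denot i.s i.W) 𝕏 i.x
  | .AE, false => extH (denot i.s i.W) 𝕏 i.x
  | .EA, false => dualH (extH (denot i.s i.W) (dualH 𝕏) i.x)
  | .AE, true => dualH (extH (denot i.s i.W) (dualH 𝕏) i.x)

/-- The extension operator `ext^fl(𝕏, ℘)` for a quantifier prefix. -/
noncomputable def extP (fl : Flag) : Hyperteam Var A → List (QItem Var) → Hyperteam Var A
  | 𝕏, [] => 𝕏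
  | 𝕏, i :: rest => extP fl (extQ fl 𝕏 i) rest

/-- Ordinary first-order formulas over the signature. -/
inductive FForm (Var RSym : Type) (ar : RSym → ℕ) : Type
  | fls : FForm Var RSym ar
  | tru : FForm Var RSym ar
  | atom (R : RSym) (xs : Fin (ar R) → Var) : FForm Var RSym ar
  | not (φ : FForm Var RSym ar) : FForm Var RSym ar
  | and (φ ψ : FForm Var RSym ar) : FForm Var RSym ar
  | or (φ ψ : FForm Var RSym ar) : FForm Var RSym ar
  | ex (x : Var) (φ : FForm Var RSym ar) : FForm Var RSym ar
  | all (x : Var) (φ : FForm Var RSym ar) : FForm Var RSym ar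

/-- Free variables of a first-order formula. -/
def folFree : FForm Var RSym ar → Set Var
  | .fls => ∅
  | .tru => ∅
  | .atom _ xs => Set.range xs
  | .not φ => folFree φ
  | .and φ ψ => folFree φ ∪ folFree ψ
  | .or φ ψ => folFree φ ∪ folFree ψ
  | .ex x φ => folFree φ \ {x}
  | .all x φ => folFree φ \ {x}

/-- Standard Tarskian satisfaction `𝔄, α ⊨_FOL φ` for first-order formulas. -/
noncomputable def folSat (𝔄 : Struct RSym ar) : FForm Var RSym ar → Asg Var 𝔄.A → Prop
  | .fls, _ => False
  | .tru, _ => True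
  | .atom R xs, α => atomSat 𝔄 R xs α
  | .not φ, α => ¬ folSat 𝔄 φ α
  | .and φ ψ, α => folSat 𝔄 φ α ∧ folSat 𝔄 ψ α
  | .or φ ψ, α => folSat 𝔄 φ α ∨ folSat 𝔄 ψ α
  | .ex x φ, α => ∃ a : 𝔄.A, folSat 𝔄 φ (updateA α x a)
  | .all x φ, α => ∀ a : 𝔄.A, folSat 𝔄 φ (updateA α x a)

/-- The FOL fragment of ADIF: every quantifier is `Q^{+W}x` with
`W = sup(φ) ∖ {x}`. -/
def IsFOLFrag : Formula Var RSym ar → Prop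
  | .fls => True
  | .tru => True
  | .atom _ _ => True
  | .not φ => IsFOLFrag φ
  | .and φ ψ => IsFOLFrag φ ∧ IsFOLFrag ψ
  | .or φ ψ => IsFOLFrag φ ∧ IsFOLFrag ψ
  | .ex s W x φ => s = true ∧ (↑W : Set Var) = supv φ \ {x} ∧ IsFOLFrag φ
  | .all s W x φ => s = true ∧ (↑W : Set Var) = supv φ \ {x} ∧ IsFOLFrag φ

/-- Tarskian satisfaction of an ADIF formula (in the FOL fragment) by an
assignment, quantifier decorations being ignored. -/
noncomputable def tarskiSat (𝔄 : Struct RSym ar) : Formula Var RSym ar → Asg Var 𝔄.A → Prop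
  | .fls, _ => False
  | .tru, _ => True
  | .atom R xs, α => atomSat 𝔄 R xs α
  | .not φ, α => ¬ tarskiSat 𝔄 φ α
  | .and φ ψ, α => tarskiSat 𝔄 φ α ∧ tarskiSat 𝔄 ψ α
  | .or φ ψ, α => tarskiSat 𝔄 φ α ∨ tarskiSat 𝔄 ψ α
  | .ex _ _ x φ, α => ∃ a : 𝔄.A, tarskiSat 𝔄 φ (updateA α x a)
  | .all _ _ x φ, α => ∀ a : 𝔄.A, tarskiSat 𝔄 φ (updateA α x a)

end ADIF

/-!
On the FOL fragment the hyperteam semantics is flat: by induction on `φ`, `⊨^{∃∀} φ` holds iff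
some team satisfies `φ` at each of its assignments, and `⊨^{∀∃} φ` iff every team has an
assignment satisfying `φ`. Negation swaps the two readings by De Morgan, and so does passing to
the dual hyperteam (by choice). For `∧` it suffices to split the hyperteam into the teams that
satisfy `φ₁` throughout and the rest. For quantifiers, `W = sup(φ) ∖ {x}` contains every variable
other than `x` that `φ` depends on, so a witness for `x` can be chosen `W`-uniformly.
-/

namespace ADIF

variable {Var RSym : Type} {ar : RSym → ℕ} {A : Type}

lemma restrictA_restrictA (α : Asg Var A) (W : Set Var) :
    restrictA (restrictA α W) W = restrictA α W := by
  funext v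
  by_cases h : v ∈ W <;> simp [restrictA, h]

lemma eqOn_restrictA (α : Asg Var A) (W : Set Var) : Set.EqOn (restrictA α W) α W :=
  fun _ hv => if_pos hv

lemma eqOn_updateA {α β : Asg Var A} {S : Set Var} {x : Var} (h : Set.EqOn α β (S \ {x}))
    (a : A) : Set.EqOn (updateA α x a) (updateA β x a) S := by
  intro v hv
  by_cases hvx : v = x
  · simp [updateA, hvx]
  · simp only [updateA, if_neg hvx]
    exact h ⟨hv, hvx⟩

def Flag.lift : Flag → (Asg Var A → Prop) → Hyperteam Var A → Prop
  | .EA, P, 𝕏 => ∃ X ∈ 𝕏, ∀ α ∈ X, P α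
  | .AE, P, 𝕏 => ∀ X ∈ 𝕏, ∃ α ∈ X, P α

namespace Flag

variable {P Q : Asg Var A → Prop}

lemma lift_not (fl : Flag) (𝕏 : Hyperteam Var A) :
    fl.lift (fun α => ¬ P α) 𝕏 ↔ ¬ fl.dual.lift P 𝕏 := by
  cases fl <;> simp [lift, dual]

lemma lift_dualH (fl : Flag) (𝕏 : Hyperteam Var A) :
    fl.lift P (dualH 𝕏) ↔ fl.dual.lift P 𝕏 := by
  have lift_EA_dualH : ∀ P : Asg Var A → Prop, EA.lift P (dualH 𝕏) ↔ AE.lift P 𝕏 := by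
    intro P
    constructor
    · rintro ⟨_, ⟨χ, hχ, rfl⟩, hP⟩ X hX
      exact ⟨χ X, hχ X hX, hP _ ⟨X, hX, rfl⟩⟩
    · intro h
      have hχ X (hX : X ∈ 𝕏) : Classical.epsilon (fun α => α ∈ X ∧ P α) ∈ X ∧
          P (Classical.epsilon (fun α => α ∈ X ∧ P α)) :=
        Classical.epsilon_spec (h X hX)
      exact ⟨_, ⟨_, fun X hX => (hχ X hX).1, rfl⟩, by
        rintro _ ⟨X, hX, rfl⟩
        exact (hχ X hX).2⟩
  cases fl
  · exact lift_EA_dualH P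
  · simpa [lift_not, dual] using (lift_EA_dualH fun α => ¬ P α).not

lemma lift_EA_and (𝕐 : Hyperteam Var A) :
    EA.lift (fun α => P α ∧ Q α) 𝕐 ↔
      ∀ 𝕏₁ 𝕏₂, Bipartition 𝕏₁ 𝕏₂ 𝕐 → EA.lift P 𝕏₁ ∨ EA.lift Q 𝕏₂ := by
  constructor
  · rintro ⟨X, hX, hPQ⟩ 𝕏₁ 𝕏₂ ⟨-, rfl⟩
    rcases hX with hX | hX
    · exact .inl ⟨X, hX, fun α hα => (hPQ α hα).1⟩
    · exact .inr ⟨X, hX, fun α hα => (hPQ α hα).2⟩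
  · intro h
    have hsplit : Bipartition {X ∈ 𝕐 | ¬ ∀ α ∈ X, P α} {X ∈ 𝕐 | ∀ α ∈ X, P α} 𝕐 := by
      constructor <;> ext X <;> simp only [Set.mem_inter_iff, Set.mem_union, Set.mem_sep_iff,
        Set.mem_empty_iff_false] <;> tauto
    rcases h _ _ hsplit with ⟨X, ⟨-, hnP⟩, hP⟩ | ⟨X, ⟨hX, hP⟩, hQ⟩
    · exact absurd hP hnP
    · exact ⟨X, hX, fun α hα => ⟨hP α hα, hQ α hα⟩⟩

lemma lift_AE_or (𝕐 : Hyperteam Var A) :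
    AE.lift (fun α => P α ∨ Q α) 𝕐 ↔
      ∃ 𝕏₁ 𝕏₂, Bipartition 𝕏₁ 𝕏₂ 𝕐 ∧ AE.lift P 𝕏₁ ∧ AE.lift Q 𝕏₂ := by
  calc AE.lift (fun α => P α ∨ Q α) 𝕐 ↔ ¬ EA.lift (fun α => ¬ P α ∧ ¬ Q α) 𝕐 := by
        simpa only [dual, not_and_or, not_not] using lift_not AE 𝕐 (P := fun α => ¬ P α ∧ ¬ Q α)
    _ ↔ _ := by simp [lift_EA_and, lift_not, dual]

variable [Nonempty A] {W : Set Var} {x : Var}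

lemma lift_EA_exists (hQ : ∀ α a, Q (updateA (restrictA α W) x a) ↔ Q (updateA α x a))
    (𝕐 : Hyperteam Var A) :
    EA.lift (fun α => ∃ a, Q (updateA α x a)) 𝕐 ↔ EA.lift Q (extH W 𝕐 x) := by
  constructor
  · rintro ⟨X, hX, hQX⟩
    -- A witness chosen from the restriction `α↾W` is a `W`-uniform Skolem function.
    let F : Asg Var A → A := fun α => Classical.epsilon fun a => Q (updateA (restrictA α W) x a)
    have hF : F ∈ FW W := fun α => by simp only [F, restrictA_restrictA]
    refine ⟨extT X F x, ⟨X, hX, F, hF, rfl⟩, ?_⟩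
    rintro _ ⟨α, hα, rfl⟩
    obtain ⟨a, ha⟩ := hQX α hα
    exact (hQ α _).1 (Classical.epsilon_spec (p := fun a => Q (updateA (restrictA α W) x a))
      ⟨a, (hQ α a).2 ha⟩)
  · rintro ⟨_, ⟨X, hX, F, -, rfl⟩, hQX⟩
    exact ⟨X, hX, fun α hα => ⟨F α, hQX _ ⟨α, hα, rfl⟩⟩⟩

lemma lift_AE_forall (hQ : ∀ α a, Q (updateA (restrictA α W) x a) ↔ Q (updateA α x a))
    (𝕐 : Hyperteam Var A) :
    AE.lift (fun α => ∀ a, Q (updateA α x a)) 𝕐 ↔ AE.lift Q (extH W 𝕐 x) := by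
  calc AE.lift (fun α => ∀ a, Q (updateA α x a)) 𝕐
        ↔ ¬ EA.lift (fun α => ∃ a, ¬ Q (updateA α x a)) 𝕐 := by
        simpa only [dual, not_exists, not_not] using
          lift_not AE 𝕐 (P := fun α => ∃ a, ¬ Q (updateA α x a))
    _ ↔ ¬ EA.lift (fun β => ¬ Q β) (extH W 𝕐 x) :=
        (lift_EA_exists (Q := fun β => ¬ Q β) (fun α a => (hQ α a).not) 𝕐).not
    _ ↔ _ := by simp [lift_not, dual]

end Flag

lemma tarskiSat_congr (𝔄 : Struct RSym ar) (φ : Formula Var RSym ar) {α β : Asg Var 𝔄.A}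
    (h : Set.EqOn α β (supv φ)) : tarskiSat 𝔄 φ α ↔ tarskiSat 𝔄 φ β := by
  induction φ generalizing α β with
  | fls | tru => rfl
  | atom R xs =>
    have hxs : ∀ i, α (xs i) = β (xs i) := fun i => h ⟨i, rfl⟩
    simp only [tarskiSat, atomSat, hxs]
  | not φ ih => exact (ih h).not
  | and φ ψ ihφ ihψ =>
    exact and_congr (ihφ fun v hv => h (.inl hv)) (ihψ fun v hv => h (.inr hv))
  | or φ ψ ihφ ihψ =>
    exact or_congr (ihφ fun v hv => h (.inl hv)) (ihψ fun v hv => h (.inr hv))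
  | ex s W x φ ih => exact exists_congr fun a => ih (eqOn_updateA h a)
  | all s W x φ ih => exact forall_congr' fun a => ih (eqOn_updateA h a)

lemma tarskiSat_updateA_restrictA (𝔄 : Struct RSym ar) (φ : Formula Var RSym ar)
    {W : Set Var} {x : Var} (hW : supv φ \ {x} ⊆ W) (α : Asg Var 𝔄.A) (a : 𝔄.A) :
    tarskiSat 𝔄 φ (updateA (restrictA α W) x a) ↔ tarskiSat 𝔄 φ (updateA α x a) :=
  tarskiSat_congr 𝔄 φ (eqOn_updateA ((eqOn_restrictA α W).mono hW) a)

lemma sat_fls_iff (𝔄 : Struct RSym ar) (fl : Flag) (𝕏 : Hyperteam Var 𝔄.A) :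
    sat 𝔄 (.fls : Formula Var RSym ar) fl 𝕏 ↔ fl.lift (fun _ => False) 𝕏 := by
  cases fl
  · simp [sat, Flag.lift, ← Set.eq_empty_iff_forall_notMem]
  · simp [sat, Flag.lift, Set.eq_empty_iff_forall_notMem]

lemma sat_tru_iff (𝔄 : Struct RSym ar) (fl : Flag) (𝕏 : Hyperteam Var 𝔄.A) :
    sat 𝔄 (.tru : Formula Var RSym ar) fl 𝕏 ↔ fl.lift (fun _ => True) 𝕏 := by
  cases fl
  · simp [sat, Flag.lift, ← Set.nonempty_iff_ne_empty, Set.Nonempty]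
  · show ∅ ∉ 𝕏 ↔ ∀ X ∈ 𝕏, ∃ α ∈ X, True
    simp only [and_true, ← Set.nonempty_def]
    exact ⟨fun h X hX => Set.nonempty_iff_ne_empty.2 (ne_of_mem_of_not_mem hX h),
      fun h h0 => (h ∅ h0).ne_empty rfl⟩

lemma sat_iff_lift_tarskiSat (𝔄 : Struct RSym ar) {φ : Formula Var RSym ar}
    (hφ : IsFOLFrag φ) (fl : Flag) (𝕏 : Hyperteam Var 𝔄.A) :
    sat 𝔄 φ fl 𝕏 ↔ fl.lift (tarskiSat 𝔄 φ) 𝕏 := by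
  have := 𝔄.nonempty
  induction φ generalizing fl 𝕏 with
  | fls => exact sat_fls_iff 𝔄 fl 𝕏
  | tru => exact sat_tru_iff 𝔄 fl 𝕏
  | atom R xs => cases fl <;> rfl
  | not φ ih => exact (ih hφ fl.dual 𝕏).not.trans (Flag.lift_not fl 𝕏).symm
  | and φ ψ ihφ ihψ =>
    have h 𝕐 := (Flag.lift_EA_and (P := tarskiSat 𝔄 φ) (Q := tarskiSat 𝔄 ψ) 𝕐).symm
    simp only [← ihφ hφ.1, ← ihψ hφ.2] at h
    cases fl
    · exact h 𝕏
    · exact (h _).trans (Flag.lift_dualH .EA 𝕏)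
  | or φ ψ ihφ ihψ =>
    have h 𝕐 := (Flag.lift_AE_or (P := tarskiSat 𝔄 φ) (Q := tarskiSat 𝔄 ψ) 𝕐).symm
    simp only [← ihφ hφ.1, ← ihψ hφ.2] at h
    cases fl
    · exact (h _).trans (Flag.lift_dualH .AE 𝕏)
    · exact h 𝕏
  | ex s W x φ ih =>
    obtain ⟨rfl, hW, hφ⟩ := hφ
    have h 𝕐 := (Flag.lift_EA_exists (tarskiSat_updateA_restrictA 𝔄 φ
      (W := denot true W) (x := x) (by simp [denot, hW])) 𝕐).symm
    simp only [← ih hφ] at h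
    cases fl
    · exact h 𝕏
    · exact (h _).trans (Flag.lift_dualH .EA 𝕏)
  | all s W x φ ih =>
    obtain ⟨rfl, hW, hφ⟩ := hφ
    have h 𝕐 := (Flag.lift_AE_forall (tarskiSat_updateA_restrictA 𝔄 φ
      (W := denot true W) (x := x) (by simp [denot, hW])) 𝕐).symm
    simp only [← ih hφ] at h
    cases fl
    · exact (h _).trans (Flag.lift_dualH .AE 𝕏)
    · exact h 𝕏

theorem fol_adequacy_general {Var RSym : Type} {ar : RSym → ℕ}
    (𝔄 : Struct RSym ar) (φ : Formula Var RSym ar) (hφ : IsFOLFrag φ)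
    (𝕏 : Hyperteam Var 𝔄.A) :
    (sat 𝔄 φ .EA 𝕏 ↔ ∃ X ∈ 𝕏, ∀ α ∈ X, tarskiSat 𝔄 φ α) ∧
    (sat 𝔄 φ .AE 𝕏 ↔ ∀ X ∈ 𝕏, ∃ α ∈ X, tarskiSat 𝔄 φ α) :=
  ⟨sat_iff_lift_tarskiSat 𝔄 hφ .EA 𝕏, sat_iff_lift_tarskiSat 𝔄 hφ .AE 𝕏⟩

/-- FOL Adequacy. -/
theorem fol_adequacy {Var RSym : Type} {ar : RSym → ℕ}
    (𝔄 : Struct RSym ar) (φ : Formula Var RSym ar) (hφ : IsFOLFrag φ)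
    (𝕏 : Hyperteam Var 𝔄.A) (h𝕏 : OverSup 𝕏 (supv φ)) :
    (sat 𝔄 φ .EA 𝕏 ↔ ∃ X ∈ 𝕏, ∀ α ∈ X, tarskiSat 𝔄 φ α) ∧
    (sat 𝔄 φ .AE 𝕏 ↔ ∀ X ∈ 𝕏, ∃ α ∈ X, tarskiSat 𝔄 φ α) :=
  fol_adequacy_general 𝔄 φ hφ 𝕏

end ADIF
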